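/- If p₁ > α and 0 < p₂ < 1, then for every maximum flow with minimum transportation cost x*, the pair (x*, μ⁰) is a pure Nash equilibrium, with payoffs u₁(x*,μ⁰) = (p₁−α)·Θ and u₂(x*,μ⁰) = 0, where Θ is the max-flow value. -/
import Mathlib


open scoped BigOperators Classical

/-- A capacitated network given by its finite edge set, capacities, per-unit
transportation costs, and the (edge sets of its) `s`-`t` paths and loops. -/
structure Network where
  E : Type
  fin : Fintype E
  dec : DecidableEq E
  /-- edge capacities -/
  c : E → ℝ
  /-- per-unit transportation costs -/
  b : E → ℝ
  /-- the `s`-`t` paths, identified with their edge sets -/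
  P : Finset (Finset E)
  /-- the loops, identified with their edge sets -/
  L : Finset (Finset E)
  c_nonneg : ∀ e, 0 ≤ c e
  b_nonneg : ∀ e, 0 ≤ b e
  P_nonempty : P.Nonempty
  P_edges_nonempty : ∀ p ∈ P, p.Nonempty

attribute [instance] Network.fin Network.dec

namespace Network

variable (N : Network)

/-- All paths and loops. -/
noncomputable def Lam : Finset (Finset N.E) := N.P ∪ N.L

/-- The flow through edge `e` induced by the path/loop flow `y`. -/
noncomputable def edgeFlow (y : Finset N.E → ℝ) (e : N.E) : ℝ :=
  ∑ l ∈ N.Lam.filter (fun l => e ∈ l), y l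

/-- Feasibility of a path/loop flow: nonnegative, supported on paths and loops,
and respecting edge capacities. -/
def Feasible (y : Finset N.E → ℝ) : Prop :=
  (∀ l, 0 ≤ y l) ∧ (∀ l, l ∉ N.Lam → y l = 0) ∧ (∀ e, N.edgeFlow y e ≤ N.c e)

/-- The value `F(x)` of the initial flow: total flow on `s`-`t` paths. -/
noncomputable def val (y : Finset N.E → ℝ) : ℝ := ∑ p ∈ N.P, y p

/-- The value `F(x^μ)` of the effective flow after the attack `μ`:
only the flow on paths avoiding all disrupted edges survives. -/
noncomputable def effVal (y : Finset N.E → ℝ) (μ : Finset N.E) : ℝ :=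
  ∑ p ∈ N.P.filter (fun p => Disjoint p μ), y p

/-- Transportation cost `C₁(x) = Σ b_e x_e`. -/
noncomputable def C1 (y : Finset N.E → ℝ) : ℝ := ∑ e, N.b e * N.edgeFlow y e

/-- Cost of an attack, `C₂(μ) = Σ_{e ∈ μ} c_e`. -/
noncomputable def C2 (μ : Finset N.E) : ℝ := ∑ e ∈ μ, N.c e

/-- Transportation cost of a path. -/
noncomputable def pathCost (p : Finset N.E) : ℝ := ∑ e ∈ p, N.b e

/-- `α`: the minimum transportation cost over all `s`-`t` paths. -/
noncomputable def alpha : ℝ := sInf (N.pathCost '' ↑N.P)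

/-- A cut: a set of edges meeting every `s`-`t` path. -/
def IsCut (K : Finset N.E) : Prop := ∀ p ∈ N.P, ¬ Disjoint p K

/-- A minimum cut: a cut of minimum capacity. -/
def IsMinCut (K : Finset N.E) : Prop := N.IsCut K ∧ ∀ K', N.IsCut K' → N.C2 K ≤ N.C2 K'

/-- `Θ`: the maximum flow value. -/
noncomputable def Theta : ℝ := sSup (N.val '' {y | N.Feasible y})

/-- A maximum flow. -/
def IsMaxFlow (y : Finset N.E → ℝ) : Prop :=
  N.Feasible y ∧ ∀ z, N.Feasible z → N.val z ≤ N.val y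

/-- A maximum flow with minimum transportation cost (an element of `Ω`). -/
def IsMFMC (y : Finset N.E → ℝ) : Prop :=
  N.IsMaxFlow y ∧ ∀ z, N.IsMaxFlow z → N.C1 y ≤ N.C1 z

/-- Assumption 1: `x` is a max-flow with minimum transportation cost all of whose
positively used `s`-`t` paths have transportation cost exactly `α`. -/
def Assumption1 (x : Finset N.E → ℝ) : Prop :=
  N.IsMFMC x ∧ ∀ p ∈ N.P, 0 < x p → N.pathCost p = N.alpha

/-- Defender's payoff `u₁(x,μ) = p₁ F(x^μ) - C₁(x)`. -/
noncomputable def u1 (p1 : ℝ) (y : Finset N.E → ℝ) (μ : Finset N.E) : ℝ :=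
  p1 * N.effVal y μ - N.C1 y

/-- Attacker's payoff `u₂(x,μ) = p₂ F(x - x^μ) - C₂(μ)`. -/
noncomputable def u2 (p2 : ℝ) (y : Finset N.E → ℝ) (μ : Finset N.E) : ℝ :=
  p2 * (N.val y - N.effVal y μ) - N.C2 μ

/-- The defender's action set: feasible flows. -/
def Flow : Type := {y : Finset N.E → ℝ // N.Feasible y}

/-- A (finitely supported) mixed strategy of the defender. -/
def MixedF (σ : N.Flow →₀ ℝ) : Prop := (∀ y, 0 ≤ σ y) ∧ (σ.sum fun _ w => w) = 1

/-- A mixed strategy of the attacker. -/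
def MixedA (σ : Finset N.E → ℝ) : Prop := (∀ μ, 0 ≤ σ μ) ∧ ∑ μ, σ μ = 1

/-- Expectation of a function of the flow under the defender's mixed strategy. -/
noncomputable def expF (σ : N.Flow →₀ ℝ) (g : (Finset N.E → ℝ) → ℝ) : ℝ :=
  σ.sum fun y w => w * g y.1

/-- Expectation of a function of the attack under the attacker's mixed strategy. -/
noncomputable def expA (σ : Finset N.E → ℝ) (h : Finset N.E → ℝ) : ℝ :=
  ∑ μ, σ μ * h μ

/-- Expectation of a function of both actions under a mixed strategy profile. -/
noncomputable def expFA (σ1 : N.Flow →₀ ℝ) (σ2 : Finset N.E → ℝ)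
    (g : (Finset N.E → ℝ) → Finset N.E → ℝ) : ℝ :=
  σ1.sum fun y w => w * ∑ μ, σ2 μ * g y.1 μ

/-- Defender's expected payoff. -/
noncomputable def U1 (p1 : ℝ) (σ1 : N.Flow →₀ ℝ) (σ2 : Finset N.E → ℝ) : ℝ :=
  N.expFA σ1 σ2 (N.u1 p1)

/-- Attacker's expected payoff. -/
noncomputable def U2 (p2 : ℝ) (σ1 : N.Flow →₀ ℝ) (σ2 : Finset N.E → ℝ) : ℝ :=
  N.expFA σ1 σ2 (N.u2 p2)

/-- Mixed Nash equilibrium. -/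
def IsNE (p1 p2 : ℝ) (σ1 : N.Flow →₀ ℝ) (σ2 : Finset N.E → ℝ) : Prop :=
  N.MixedF σ1 ∧ N.MixedA σ2 ∧
  (∀ τ1, N.MixedF τ1 → N.U1 p1 τ1 σ2 ≤ N.U1 p1 σ1 σ2) ∧
  (∀ τ2, N.MixedA τ2 → N.U2 p2 σ1 τ2 ≤ N.U2 p2 σ1 σ2)

/-- Pure Nash equilibrium. -/
def IsPureNE (p1 p2 : ℝ) (x : Finset N.E → ℝ) (μ : Finset N.E) : Prop :=
  N.Feasible x ∧
  (∀ y, N.Feasible y → N.u1 p1 y μ ≤ N.u1 p1 x μ) ∧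
  (∀ ν, N.u2 p2 x ν ≤ N.u2 p2 x μ)

end Network

namespace Network

variable (N : Network)

lemma P_subset_Lam : N.P ⊆ N.Lam := Finset.subset_union_left

lemma pathCost_nonneg (l : Finset N.E) : 0 ≤ N.pathCost l :=
  Finset.sum_nonneg fun e _ => N.b_nonneg e

lemma alpha_nonneg : 0 ≤ N.alpha :=
  Real.sInf_nonneg (by rintro _ ⟨p, _, rfl⟩; exact N.pathCost_nonneg p)

lemma alpha_le_pathCost {p : Finset N.E} (hp : p ∈ N.P) : N.alpha ≤ N.pathCost p := by
  apply csInf_le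
  · exact (Set.Finite.image _ N.P.finite_toSet).bddBelow
  · exact Set.mem_image_of_mem _ hp

lemma effVal_empty (y : Finset N.E → ℝ) : N.effVal y ∅ = N.val y := by
  unfold effVal val
  rw [Finset.filter_true_of_mem fun p _ => Finset.disjoint_empty_right p]

lemma C2_empty : N.C2 ∅ = 0 := Finset.sum_empty

lemma C1_eq (y : Finset N.E → ℝ) :
    N.C1 y = ∑ l ∈ N.Lam, y l * N.pathCost l := by
  unfold C1 edgeFlow pathCost
  simp only [Finset.sum_filter, Finset.mul_sum, mul_ite, mul_zero]
  rw [Finset.sum_comm]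
  refine Finset.sum_congr rfl fun l _ => ?_
  rw [Finset.sum_ite_mem, Finset.univ_inter]
  exact Finset.sum_congr rfl fun e _ => mul_comm _ _

lemma val_nonneg {y : Finset N.E → ℝ} (hy : N.Feasible y) : 0 ≤ N.val y :=
  Finset.sum_nonneg fun p _ => hy.1 p

lemma effVal_le_val {y : Finset N.E → ℝ} (hy : N.Feasible y) (μ : Finset N.E) :
    N.effVal y μ ≤ N.val y :=
  Finset.sum_le_sum_of_subset_of_nonneg (Finset.filter_subset _ _)
    (fun p hp _ => hy.1 p)

lemma alpha_val_le_C1 {y : Finset N.E → ℝ} (hy : N.Feasible y) :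
    N.alpha * N.val y ≤ N.C1 y := by
  rw [N.C1_eq]
  calc N.alpha * N.val y = ∑ p ∈ N.P, N.alpha * y p := by
        rw [val, Finset.mul_sum]
    _ ≤ ∑ p ∈ N.P, y p * N.pathCost p := by
        refine Finset.sum_le_sum fun p hp => ?_
        rw [mul_comm]
        exact mul_le_mul_of_nonneg_left (N.alpha_le_pathCost hp) (hy.1 p)
    _ ≤ ∑ l ∈ N.Lam, y l * N.pathCost l := by
        refine Finset.sum_le_sum_of_subset_of_nonneg N.P_subset_Lam fun l _ _ =>
          mul_nonneg (hy.1 l) (N.pathCost_nonneg l)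

/-- Under Assumption 1, every MFMC has transportation cost `α · val`. -/
lemma C1_MFMC {x xs : Finset N.E → ℝ} (hx : N.Assumption1 x) (hxs : N.IsMFMC xs) :
    N.C1 xs = N.alpha * N.val xs := by
  obtain ⟨⟨hxmf, hxmin⟩, hxα⟩ := hx
  obtain ⟨hsmf, hsmin⟩ := hxs
  -- the flow x with the loops zeroed out
  set x' : Finset N.E → ℝ := fun l => if l ∈ N.P then x l else 0 with hx'
  have hxfeas := hxmf.1
  have hfeas' : N.Feasible x' := by
    refine ⟨fun l => ?_, fun l hl => ?_, fun e => ?_⟩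
    · by_cases h : l ∈ N.P <;> simp [hx', h, hxfeas.1 l]
    · have h : l ∉ N.P := fun hP => hl (N.P_subset_Lam hP)
      simp [hx', h]
    · refine le_trans ?_ (hxfeas.2.2 e)
      unfold Network.edgeFlow
      refine Finset.sum_le_sum fun l _ => ?_
      by_cases h : l ∈ N.P <;> simp [hx', h, hxfeas.1 l]
  have hval' : N.val x' = N.val x := by
    refine Finset.sum_congr rfl fun p hp => ?_
    simp [hx', hp]
  have hC1x' : N.C1 x' = N.alpha * N.val x := by
    rw [N.C1_eq]
    rw [← Finset.sum_subset N.P_subset_Lam (by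
      intro l _ hl
      simp [hx', hl])]
    have : ∀ p ∈ N.P, x' p * N.pathCost p = N.alpha * x p := by
      intro p hp
      simp only [hx', if_pos hp]
      rcases (hxfeas.1 p).lt_or_eq with h | h
      · rw [hxα p hp h, mul_comm]
      · rw [← h]; ring
    rw [Finset.sum_congr rfl this, ← Finset.mul_sum]; rfl
  have hmax' : N.IsMaxFlow x' := ⟨hfeas', fun z hz => hval' ▸ hxmf.2 z hz⟩
  have hvalxs : N.val xs = N.val x :=
    le_antisymm (hxmf.2 xs hsmf.1) (hsmf.2 x hxmf.1)
  have h1 : N.C1 xs ≤ N.alpha * N.val x := hC1x' ▸ hsmin x' hmax'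
  have h2 : N.alpha * N.val xs ≤ N.C1 xs := N.alpha_val_le_C1 hsmf.1
  rw [hvalxs] at h2 ⊢
  exact le_antisymm h1 h2

lemma damaged_le_C2 {xs : Finset N.E → ℝ} (hxs : N.Feasible xs) (ν : Finset N.E) :
    N.val xs - N.effVal xs ν ≤ N.C2 ν := by
  have hsplit : N.val xs - N.effVal xs ν
      = ∑ p ∈ N.P.filter (fun p => ¬ Disjoint p ν), xs p := by
    have := Finset.sum_filter_add_sum_filter_not N.P (fun p => Disjoint p ν) xs
    unfold val effVal; linarith
  rw [hsplit]
  calc ∑ p ∈ N.P.filter (fun p => ¬ Disjoint p ν), xs p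
      ≤ ∑ p ∈ N.P.filter (fun p => ¬ Disjoint p ν), ∑ e ∈ ν, (if e ∈ p then xs p else 0) := by
        refine Finset.sum_le_sum fun p hp => ?_
        obtain ⟨e₀, he₀p, he₀ν⟩ := Finset.not_disjoint_iff.mp (Finset.mem_filter.mp hp).2
        rw [Finset.sum_ite_mem]
        exact Finset.single_le_sum (f := fun _ => xs p)
          (fun i _ => hxs.1 p) (Finset.mem_inter.mpr ⟨he₀ν, he₀p⟩)
    _ = ∑ e ∈ ν, ∑ p ∈ (N.P.filter (fun p => ¬ Disjoint p ν)).filter (fun p => e ∈ p), xs p := by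
        rw [Finset.sum_comm]
        exact Finset.sum_congr rfl fun e _ => (Finset.sum_filter _ _).symm
    _ ≤ ∑ e ∈ ν, N.c e := by
        refine Finset.sum_le_sum fun e _ => ?_
        refine le_trans ?_ (hxs.2.2 e)
        refine Finset.sum_le_sum_of_subset_of_nonneg ?_ (fun l _ _ => hxs.1 l)
        intro p hp
        rw [Finset.mem_filter] at hp ⊢
        exact ⟨N.P_subset_Lam (Finset.mem_filter.mp hp.1).1, hp.2⟩
    _ = N.C2 ν := rfl

end Network

/-- if `p₁ > α` and `0 < p₂ < 1`, then for every maximum flow with minimum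
transportation cost `x*`, the pair `(x*, μ⁰)` is a pure Nash equilibrium, with payoffs
`u₁(x*,μ⁰) = (p₁ − α)·Θ` and `u₂(x*,μ⁰) = 0`. -/
theorem nash_equilibrium_region_II (N : Network) (p1 p2 : ℝ)
    (hp1 : N.alpha < p1) (hp2pos : 0 < p2) (hp2 : p2 < 1)
    (hA1 : ∃ x, N.Assumption1 x) :
    ∀ xs, N.IsMFMC xs →
      N.IsPureNE p1 p2 xs ∅ ∧
      N.u1 p1 xs ∅ = (p1 - N.alpha) * N.Theta ∧ N.u2 p2 xs ∅ = 0 := by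
  obtain ⟨x, hx⟩ := hA1
  intro xs hxs
  have hfeas : N.Feasible xs := hxs.1.1
  have hC1 : N.C1 xs = N.alpha * N.val xs := N.C1_MFMC hx hxs
  -- Θ = val xs
  have hTheta : N.Theta = N.val xs := by
    refine le_antisymm ?_ ?_
    · refine Real.sSup_le ?_ (N.val_nonneg hfeas)
      rintro v ⟨z, hz, rfl⟩
      exact hxs.1.2 z hz
    · exact le_csSup ⟨N.val xs, by rintro v ⟨z, hz, rfl⟩; exact hxs.1.2 z hz⟩
        (Set.mem_image_of_mem _ hfeas)
  have hu1 : N.u1 p1 xs ∅ = (p1 - N.alpha) * N.Theta := by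
    rw [Network.u1, N.effVal_empty, hC1, hTheta]; ring
  have hu2 : N.u2 p2 xs ∅ = 0 := by
    rw [Network.u2, N.effVal_empty, N.C2_empty]; ring
  refine ⟨⟨hfeas, ?_, ?_⟩, hu1, hu2⟩
  · -- defender best response
    intro y hy
    have h1 : N.u1 p1 y ∅ ≤ (p1 - N.alpha) * N.val y := by
      rw [Network.u1, N.effVal_empty]
      have := N.alpha_val_le_C1 hy
      nlinarith
    have h2 : (p1 - N.alpha) * N.val y ≤ (p1 - N.alpha) * N.val xs :=
      mul_le_mul_of_nonneg_left (hxs.1.2 y hy) (by linarith)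
    calc N.u1 p1 y ∅ ≤ (p1 - N.alpha) * N.val xs := le_trans h1 h2
      _ = N.u1 p1 xs ∅ := by rw [hu1, hTheta]
  · -- attacker best response
    intro ν
    rw [hu2, Network.u2]
    have ht : 0 ≤ N.val xs - N.effVal xs ν := by
      have := N.effVal_le_val hfeas ν
      linarith
    have hd := N.damaged_le_C2 hfeas ν
    nlinarith
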